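/- Let k₀ > 0 be the constant from the nonlinear interpolation inequality for W and let 0 < k < k₀. Let I ⊂ ℝ be an open bounded interval, ε_j → 0⁺, and (u_j) ⊂ W^{2,2}(I) with sup_j F^k_{ε_j}(u_j, I) < +∞ and u_j → u in L¹(I) for some u ∈ L¹(I). Then ε_j u_j' → 0 in L¹(I). -/

import Mathlib

open MeasureTheory intervalIntegral Filter

/-- `u ∈ W^{2,2}(a,b)` with first derivative `u'` and second derivative `u''`. -/
def W22On (u u' u'' : ℝ → ℝ) (a b : ℝ) : Prop :=
  (∀ x ∈ Set.Icc a b, HasDerivWithinAt u (u' x) (Set.Icc a b) x) ∧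
  ContinuousOn u' (Set.Icc a b) ∧
  MeasureTheory.IntegrableOn u'' (Set.Icc a b) ∧
  MeasureTheory.IntegrableOn (fun x => (u'' x) ^ 2) (Set.Icc a b) ∧
  (∀ x ∈ Set.Icc a b, u' x = u' a + ∫ t in a..x, u'' t)

/-!
Cut `(α, β)` into `N ≈ (β - α) / ε` equal pieces of length `L ≤ ε` with `ε / L → 1` and apply
the interpolation inequality on each piece. Summing,
`k₀ ε ∫ u'² ≤ (ε / L²) ∫ W(u) + ε L² ∫ u''² ≤ ρ (∫ W(u) / ε + ε³ ∫ u''²) ≤ ρ (M + k ε ∫ u'²)`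
for any fixed `ρ > 1` once `ε` is small. Taking `ρ k < k₀` the gradient term is absorbed, so
`ε ∫ u'²` stays bounded, and then `∫ |ε u'| ≤ √ε ((β - α) + ε ∫ u'²) / 2 → 0`.
-/

open Set Topology

namespace W22On

variable {u u' u'' : ℝ → ℝ} {a b : ℝ}

theorem mono (h : W22On u u' u'' a b) {c d : ℝ} (hac : a ≤ c) (hdb : d ≤ b) :
    W22On u u' u'' c d := by
  obtain ⟨hderiv, hcont, hint, hint_sq, hftc⟩ := h
  have hsub : Icc c d ⊆ Icc a b := Icc_subset_Icc hac hdb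
  refine ⟨fun x hx => (hderiv x (hsub hx)).mono hsub, hcont.mono hsub, hint.mono_set hsub,
    hint_sq.mono_set hsub, fun x hx => ?_⟩
  have hcd : c ≤ d := hx.1.trans hx.2
  have hac' : IntervalIntegrable u'' volume a c := (hint.mono_set <| by
    rw [uIcc_of_le hac]; exact Icc_subset_Icc le_rfl (hcd.trans hdb)).intervalIntegrable
  have hcx : IntervalIntegrable u'' volume c x := (hint.mono_set <| by
    rw [uIcc_of_le hx.1]; exact Icc_subset_Icc hac (hx.2.trans hdb)).intervalIntegrable
  rw [hftc x (hsub hx), hftc c ⟨hac, hcd.trans hdb⟩, ← integral_add_adjacent_intervals hac' hcx]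
  ring

theorem continuousOn (h : W22On u u' u'' a b) : ContinuousOn u (Icc a b) :=
  fun x hx => (h.1 x hx).continuousWithinAt

theorem integrableOn_comp {W : ℝ → ℝ} (hW : Continuous W) (h : W22On u u' u'' a b) :
    IntegrableOn (fun x => W (u x)) (Icc a b) :=
  (hW.comp_continuousOn h.continuousOn).integrableOn_Icc

theorem integrableOn_deriv_sq (h : W22On u u' u'' a b) :
    IntegrableOn (fun x => u' x ^ 2) (Icc a b) :=
  (h.2.1.pow 2).integrableOn_Icc

theorem integral_energy_eq {W : ℝ → ℝ} (hW : Continuous W) (hab : a ≤ b)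
    (h : W22On u u' u'' a b) (k ε : ℝ) :
    ∫ x in a..b, (W (u x) / ε - k * ε * u' x ^ 2 + ε ^ 3 * u'' x ^ 2) =
      (∫ x in a..b, W (u x)) / ε - k * ε * (∫ x in a..b, u' x ^ 2) +
        ε ^ 3 * ∫ x in a..b, u'' x ^ 2 := by
  have hW' := (intervalIntegrable_iff_integrableOn_Icc_of_le hab).2 (h.integrableOn_comp hW)
  have h1 := (intervalIntegrable_iff_integrableOn_Icc_of_le hab).2 h.integrableOn_deriv_sq
  have h2 := (intervalIntegrable_iff_integrableOn_Icc_of_le hab).2 h.2.2.2.1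
  rw [integral_add ((hW'.div_const _).sub (h1.const_mul _)) (h2.const_mul _),
    integral_sub (hW'.div_const _) (h1.const_mul _), intervalIntegral.integral_div,
    intervalIntegral.integral_const_mul, intervalIntegral.integral_const_mul]

end W22On

theorem uniform_node_mem_Icc {α β : ℝ} (hαβ : α ≤ β) {N i : ℕ} (hi : i ≤ N) :
    α + i * ((β - α) / N) ∈ Icc α β := by
  have hiN : (i : ℝ) / N ≤ 1 := div_le_one_of_le₀ (by exact_mod_cast hi) N.cast_nonneg
  rw [show (i : ℝ) * ((β - α) / N) = i / N * (β - α) by ring]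
  constructor <;> nlinarith [div_nonneg (Nat.cast_nonneg (α := ℝ) i) (Nat.cast_nonneg N)]

theorem sum_integral_uniform_partition {f : ℝ → ℝ} {α β : ℝ} (hαβ : α ≤ β)
    (hf : IntegrableOn f (Icc α β)) {N : ℕ} (hN : N ≠ 0) :
    ∑ i ∈ Finset.range N, ∫ x in α + i * ((β - α) / N)..α + (i + 1 : ℕ) * ((β - α) / N), f x =
      ∫ x in α..β, f x := by
  have hsum := sum_integral_adjacent_intervals (μ := volume) (f := f)
    (a := fun i : ℕ => α + i * ((β - α) / N)) (n := N) fun i hi =>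
      (hf.mono_set (uIcc_subset_Icc (uniform_node_mem_Icc hαβ hi.le)
        (uniform_node_mem_Icc hαβ hi))).intervalIntegrable
  simpa [mul_div_cancel₀ (β - α) (Nat.cast_ne_zero.2 hN : (N : ℝ) ≠ 0)] using hsum

def NonlinearInterpolation (W : ℝ → ℝ) (k₀ : ℝ) : Prop :=
  ∀ a b : ℝ, a < b → ∀ u u' u'' : ℝ → ℝ, W22On u u' u'' a b →
    k₀ * ∫ x in a..b, (u' x) ^ 2 ≤
      ((b - a) ^ 2)⁻¹ * (∫ x in a..b, W (u x)) + (b - a) ^ 2 * ∫ x in a..b, (u'' x) ^ 2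

theorem NonlinearInterpolation.le_of_uniform_partition {W : ℝ → ℝ} {k₀ : ℝ}
    (hk₀ : NonlinearInterpolation W k₀) (hW : Continuous W) {u u' u'' : ℝ → ℝ} {α β : ℝ}
    (hαβ : α < β) (hu : W22On u u' u'' α β) {N : ℕ} (hN : N ≠ 0) :
    k₀ * ∫ x in α..β, u' x ^ 2 ≤
      (((β - α) / N) ^ 2)⁻¹ * (∫ x in α..β, W (u x)) +
        ((β - α) / N) ^ 2 * ∫ x in α..β, u'' x ^ 2 := by
  rw [← sum_integral_uniform_partition hαβ.le hu.integrableOn_deriv_sq hN,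
    ← sum_integral_uniform_partition hαβ.le (hu.integrableOn_comp hW) hN,
    ← sum_integral_uniform_partition hαβ.le hu.2.2.2.1 hN,
    Finset.mul_sum, Finset.mul_sum, Finset.mul_sum, ← Finset.sum_add_distrib]
  refine Finset.sum_le_sum fun i hi => ?_
  have hi := Finset.mem_range.1 hi
  have hlen : α + (i + 1 : ℕ) * ((β - α) / N) - (α + i * ((β - α) / N)) = (β - α) / N := by
    push_cast; ring
  have hL : 0 < (β - α) / N := div_pos (sub_pos.2 hαβ) (Nat.cast_pos.2 (Nat.pos_of_ne_zero hN))
  have hinterp := hk₀ _ _ (by linarith) u u' u''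
    (hu.mono (uniform_node_mem_Icc hαβ.le hi.le).1 (uniform_node_mem_Icc hαβ.le hi).2)
  rwa [hlen] at hinterp

theorem exists_uniform_partition_scale {ℓ ε : ℝ} (hℓ : 0 < ℓ) (hε : 0 < ε) :
    ∃ N : ℕ, N ≠ 0 ∧ ℓ / N ≤ ε ∧ ε ≤ (1 + ε / ℓ) * (ℓ / N) := by
  set N := ⌈ℓ / ε⌉₊
  have hN : (0 : ℝ) < N := Nat.cast_pos.2 (Nat.ceil_pos.2 (by positivity))
  refine ⟨N, Nat.cast_ne_zero.1 hN.ne', ?_, ?_⟩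
  · rw [div_le_iff₀ hN, ← div_le_iff₀' hε]
    exact Nat.le_ceil _
  · have hlt : (N : ℝ) < ℓ / ε + 1 := Nat.ceil_lt_add_one (by positivity)
    rw [show (1 + ε / ℓ) * (ℓ / N) = (ℓ + ε) / N by field_simp, le_div_iff₀ hN]
    have h := mul_lt_mul_of_pos_left hlt hε
    rw [mul_add, mul_div_cancel₀ _ hε.ne', mul_one] at h
    linarith

theorem interpolation_energy_absorb {k₀ k ε L ρ M IW IP IB : ℝ} (hε : 0 < ε) (hL : 0 < L)
    (hLε : L ≤ ε) (hεL : ε ^ 2 ≤ ρ * L ^ 2) (hρ : 1 ≤ ρ) (hIW : 0 ≤ IW) (hIB : 0 ≤ IB)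
    (hinterp : k₀ * IP ≤ (L ^ 2)⁻¹ * IW + L ^ 2 * IB)
    (henergy : IW / ε - k * ε * IP + ε ^ 3 * IB ≤ M) :
    (k₀ - ρ * k) * (ε * IP) ≤ ρ * M := by
  have hratio : ε * (L ^ 2)⁻¹ ≤ ρ / ε := by
    rw [← div_eq_mul_inv, div_le_div_iff₀ (by positivity) hε]
    nlinarith
  have hscale : ε * L ^ 2 ≤ ρ * ε ^ 3 := by
    have : L ^ 2 ≤ ε ^ 2 := pow_le_pow_left₀ hL.le hLε 2
    nlinarith [pow_pos hε 3]
  have : k₀ * (ε * IP) ≤ ρ * (M + k * ε * IP) := calc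
    k₀ * (ε * IP) = ε * (k₀ * IP) := by ring
    _ ≤ ε * ((L ^ 2)⁻¹ * IW + L ^ 2 * IB) := mul_le_mul_of_nonneg_left hinterp hε.le
    _ = ε * (L ^ 2)⁻¹ * IW + ε * L ^ 2 * IB := by ring
    _ ≤ ρ / ε * IW + ρ * ε ^ 3 * IB := by gcongr
    _ = ρ * (IW / ε + ε ^ 3 * IB) := by ring
    _ ≤ ρ * (M + k * ε * IP) := mul_le_mul_of_nonneg_left (by linarith) (by linarith)
  linarith

theorem W22On.eps_mul_integral_deriv_sq_le {W : ℝ → ℝ} {k₀ k ε ρ M α β : ℝ}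
    {u u' u'' : ℝ → ℝ} (hk₀ : NonlinearInterpolation W k₀) (hW : Continuous W)
    (hW_nonneg : ∀ s, 0 ≤ W s) (hαβ : α < β) (hu : W22On u u' u'' α β) (hε : 0 < ε)
    (hρ : (1 + ε / (β - α)) ^ 2 ≤ ρ)
    (hE : ∫ x in α..β, (W (u x) / ε - k * ε * u' x ^ 2 + ε ^ 3 * u'' x ^ 2) ≤ M) :
    (k₀ - ρ * k) * (ε * ∫ x in α..β, u' x ^ 2) ≤ ρ * M := by
  obtain ⟨N, hN, hLε, hεL⟩ := exists_uniform_partition_scale (sub_pos.2 hαβ) hε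
  have hL : 0 < (β - α) / N := div_pos (sub_pos.2 hαβ) (by positivity)
  have hσ : 1 ≤ 1 + ε / (β - α) := le_add_of_nonneg_right (div_nonneg hε.le (sub_pos.2 hαβ).le)
  refine interpolation_energy_absorb hε hL hLε ?_ ((one_le_pow₀ hσ).trans hρ)
    (integral_nonneg hαβ.le fun x _ => hW_nonneg _)
    (integral_nonneg hαβ.le fun x _ => sq_nonneg _)
    (hk₀.le_of_uniform_partition hW hαβ hu hN) (hu.integral_energy_eq hW hαβ.le k ε ▸ hE)
  calc ε ^ 2 ≤ ((1 + ε / (β - α)) * ((β - α) / N)) ^ 2 := pow_le_pow_left₀ hε.le hεL 2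
    _ = (1 + ε / (β - α)) ^ 2 * ((β - α) / N) ^ 2 := mul_pow _ _ _
    _ ≤ ρ * ((β - α) / N) ^ 2 := by gcongr

theorem integral_abs_mul_le_sqrt_mul {f : ℝ → ℝ} {a b ε : ℝ} (hab : a ≤ b) (hε : 0 ≤ ε)
    (hf : ContinuousOn f (Icc a b)) :
    ∫ x in a..b, |ε * f x| ≤ √ε / 2 * ((b - a) + ε * ∫ x in a..b, f x ^ 2) := by
  obtain ⟨s, hs, rfl⟩ : ∃ s, 0 ≤ s ∧ ε = s ^ 2 := ⟨√ε, Real.sqrt_nonneg ε, (Real.sq_sqrt hε).symm⟩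
  rw [Real.sqrt_sq hs]
  have hpt : ∀ x, |s ^ 2 * f x| ≤ s / 2 * (1 + s ^ 2 * f x ^ 2) := by
    intro x
    rw [abs_mul, abs_of_nonneg (sq_nonneg s), ← sq_abs (f x)]
    nlinarith [mul_nonneg hs (sq_nonneg (s * |f x| - 1))]
  have hsq : IntervalIntegrable (fun x => f x ^ 2) volume a b :=
    (hf.pow 2).intervalIntegrable_of_Icc hab
  calc ∫ x in a..b, |s ^ 2 * f x|
      ≤ ∫ x in a..b, s / 2 * (1 + s ^ 2 * f x ^ 2) :=
        integral_mono_on hab ((continuousOn_const.mul hf).abs.intervalIntegrable_of_Icc hab)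
          ((intervalIntegrable_const.add (hsq.const_mul _)).const_mul _) fun x _ => hpt x
    _ = s / 2 * ((b - a) + s ^ 2 * ∫ x in a..b, f x ^ 2) := by
        rw [intervalIntegral.integral_const_mul,
          integral_add intervalIntegrable_const (hsq.const_mul _),
          intervalIntegral.integral_const_mul, intervalIntegral.integral_const, smul_eq_mul,
          mul_one]

theorem eps_deriv_tendsto_zero_general
    (W : ℝ → ℝ) (hWcont : Continuous W) (hWnonneg : ∀ s, 0 ≤ W s)
    (k₀ : ℝ)
    (hk₀ : ∀ a b : ℝ, a < b → ∀ u u' u'' : ℝ → ℝ, W22On u u' u'' a b →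
      k₀ * ∫ x in a..b, (u' x) ^ 2 ≤
        ((b - a) ^ 2)⁻¹ * (∫ x in a..b, W (u x)) +
          (b - a) ^ 2 * ∫ x in a..b, (u'' x) ^ 2)
    (k : ℝ) (hk : k < k₀)
    (α β : ℝ) (hαβ : α < β)
    (ε : ℕ → ℝ) (hεpos : ∀ j, 0 < ε j) (hεlim : Tendsto ε atTop (nhds 0))
    (u u' u'' : ℕ → ℝ → ℝ) (hu : ∀ j, W22On (u j) (u' j) (u'' j) α β)
    (M : ℝ)
    (hM : ∀ j, (∫ x in α..β,
        (W (u j x) / ε j - k * ε j * (u' j x) ^ 2 + (ε j) ^ 3 * (u'' j x) ^ 2)) ≤ M) :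
    Tendsto (fun j => ∫ x in α..β, |ε j * u' j x|) atTop (nhds 0) := by
  obtain ⟨ρ, hρk, hρ⟩ : ∃ ρ, ρ * k < k₀ ∧ 1 < ρ :=
    ((((continuous_id.mul continuous_const).tendsto' 1 k (one_mul k)).eventually_lt_const
      hk).filter_mono nhdsWithin_le_nhds |>.and self_mem_nhdsWithin).exists (f := 𝓝[>] 1)
  have hsmall : ∀ᶠ j in atTop, (1 + ε j / (β - α)) ^ 2 < ρ := by
    refine Tendsto.eventually_lt_const hρ ?_
    simpa using ((hεlim.div_const (β - α)).const_add 1).pow 2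
  have hbound : ∀ᶠ j in atTop, ε j * ∫ x in α..β, (u' j x) ^ 2 ≤ ρ * M / (k₀ - ρ * k) :=
    hsmall.mono fun j hj => (le_div_iff₀' (sub_pos.2 hρk)).2 <|
      (hu j).eps_mul_integral_deriv_sq_le hk₀ hWcont hWnonneg hαβ (hεpos j) hj.le (hM j)
  have hlim : Tendsto (fun j => √(ε j) / 2 * ((β - α) + ρ * M / (k₀ - ρ * k))) atTop (𝓝 0) := by
    simpa using (((Real.continuous_sqrt.tendsto 0).comp hεlim).div_const 2).mul_const
      ((β - α) + ρ * M / (k₀ - ρ * k))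
  refine squeeze_zero' (.of_forall fun j => integral_nonneg hαβ.le fun x _ => abs_nonneg _)
    ?_ hlim
  filter_upwards [hbound] with j hj
  calc _ ≤ _ := integral_abs_mul_le_sqrt_mul hαβ.le (hεpos j).le (hu j).2.1
    _ ≤ _ := by gcongr

/-- For `0 < k < k₀`, if `(u_j) ⊂ W^{2,2}((α,β))` has equibounded energies
`F^k_{ε_j}(u_j)` with `ε_j → 0⁺` and `u_j → v` in `L¹`, then `ε_j u_j' → 0` in `L¹`. -/
theorem eps_deriv_tendsto_zero
    (W : ℝ → ℝ) (hWcont : Continuous W) (hWnonneg : ∀ s, 0 ≤ W s)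
    (hWzero : ∀ s, W s = 0 ↔ s = 1 ∨ s = -1)
    (c : ℝ) (hc : 0 < c)
    (hWgp : ∀ s, 0 ≤ s → c * (s - 1) ^ 2 ≤ W s)
    (hWgn : ∀ s, s ≤ 0 → c * (s + 1) ^ 2 ≤ W s)
    (k₀ : ℝ) (hk₀pos : 0 < k₀)
    (hk₀ : ∀ a b : ℝ, a < b → ∀ u u' u'' : ℝ → ℝ, W22On u u' u'' a b →
      k₀ * ∫ x in a..b, (u' x) ^ 2 ≤
        ((b - a) ^ 2)⁻¹ * (∫ x in a..b, W (u x)) +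
          (b - a) ^ 2 * ∫ x in a..b, (u'' x) ^ 2)
    (k : ℝ) (hkpos : 0 < k) (hk : k < k₀)
    (α β : ℝ) (hαβ : α < β)
    (ε : ℕ → ℝ) (hεpos : ∀ j, 0 < ε j) (hεlim : Tendsto ε atTop (nhds 0))
    (u u' u'' : ℕ → ℝ → ℝ) (hu : ∀ j, W22On (u j) (u' j) (u'' j) α β)
    (M : ℝ)
    (hM : ∀ j, (∫ x in α..β,
        (W (u j x) / ε j - k * ε j * (u' j x) ^ 2 + (ε j) ^ 3 * (u'' j x) ^ 2)) ≤ M)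
    (v : ℝ → ℝ) (hv : MeasureTheory.IntegrableOn v (Set.Ioo α β))
    (hconv : Tendsto (fun j => ∫ x in α..β, |u j x - v x|) atTop (nhds 0)) :
    Tendsto (fun j => ∫ x in α..β, |ε j * u' j x|) atTop (nhds 0) :=
  eps_deriv_tendsto_zero_general W hWcont hWnonneg k₀ hk₀ k hk α β hαβ ε hεpos hεlim u u' u'' hu M
    hM
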